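/- Let A be a finite commutative unital ring and let u be a unit of A with u ≠ 1, u ≠ −1 and u ≠ u^{−1}. Then M_6(u, u^{−1}, u, u^{−1}, u, u^{−1}) = Id, the (u, u^{−1})-dynomial minimal solution over A has size 6, and it is irreducible. -/

import Mathlib

/-!
Write `v = u⁻¹`. The matrix `N = M₂(u, v) = [[0, -v], [u, -1]]` has trace `-1` and determinant `1`,
so `N² + N + 1 = 0` and `M₆(u, v, u, v, u, v) = N³ = 1`; the `(0, 1)` entries of `N` and `N² = -1 - N`
are `-v` and `v`, both nonzero, so no shorter `(u, v)`-dynomial is a λ-quiddity.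

If the 6-tuple were equivalent to `a ⊕ b` with `b` a λ-quiddity of size `l`, then `3 ≤ l ≤ 5`, and
`(b₂, …, b_{l-1})` is a block of `1`, `2` or `3` consecutive entries of the alternating tuple. The
`(1, 1)` entry of `M_l(b) = ±1` is minus the continuant of this block, but these continuants are
`v`, `uv - 1 = 0`, `-v` (or `u`, `0`, `-u`), and none of them is `±1`.
-/


namespace Quiddity

variable {A : Type*} [CommRing A]

/-- `mMat [a₁, …, aₙ]` is the matrix product `[[aₙ,-1],[1,0]] ⋯ [[a₁,-1],[1,0]]`. -/
def mMat : List A → Matrix (Fin 2) (Fin 2) A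
  | [] => 1
  | a :: t => mMat t * !![a, -1; 1, 0]

/-- Continuant: `cont [] = K₀ = 1`, `cont [a] = K₁(a) = a`, and the continuant recursion. -/
def cont : List A → A
  | [] => 1
  | [a] => a
  | a :: b :: t => a * cont (b :: t) - cont t

/-- A λ-quiddity is a tuple with `Mₙ(a₁,…,aₙ) = ± Id`. -/
def IsQuiddity (l : List A) : Prop := mMat l = 1 ∨ mMat l = -1

/-- The sum `⊕` of two tuples (meaningful for tuples of length ≥ 2):
`(a₁,…,aₘ) ⊕ (b₁,…,b_l) = (a₁+b_l, a₂,…,a_{m−1}, aₘ+b₁, b₂,…,b_{l−1})`. -/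
def oplus (la lb : List A) : List A :=
  (la.headD 0 + lb.getLastD 0) ::
    (la.tail.dropLast ++ (la.getLastD 0 + lb.headD 0) :: lb.tail.dropLast)

/-- Two tuples are equivalent if one is a cyclic permutation of the other or of its
reversal. -/
def TupleEquiv (l l' : List A) : Prop :=
  List.IsRotated l l' ∨ List.IsRotated l.reverse l'

/-- A λ-quiddity `c` is reducible if `c ∼ a ⊕ b` with `b` a λ-quiddity and both of size ≥ 3. -/
def QuiddityReducible (c : List A) : Prop :=
  ∃ a b : List A, 3 ≤ a.length ∧ 3 ≤ b.length ∧ IsQuiddity b ∧ TupleEquiv c (oplus a b)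

/-- `(a, b, a, b, …, a, b)` with `k` repetitions of the pair `(a, b)` (size `2k`). -/
def dynList : ℕ → A → A → List A
  | 0, _, _ => []
  | k + 1, a, b => a :: b :: dynList k a b

/-- `(u, v, v, u, v, v, …, u, v, v)` with `k` repetitions of the block `(u, v, v)`
(size `3k`). -/
def triList : ℕ → A → A → List A
  | 0, _, _ => []
  | k + 1, a, b => a :: b :: b :: triList k a b

end Quiddity

namespace Quiddity

section

variable {α : Type*}

theorem length_dynList (k : ℕ) (a b : α) : (dynList k a b).length = 2 * k := by
  induction k with
  | zero => rfl
  | succ k ih => simp only [dynList, List.length_cons, ih]; ring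

theorem dynList_append_singleton (k : ℕ) (a b : α) :
    dynList k a b ++ [a] = a :: dynList k b a := by
  induction k with
  | zero => rfl
  | succ k ih => simp [dynList, ih]

theorem reverse_dynList (k : ℕ) (a b : α) : (dynList k a b).reverse = dynList k b a := by
  induction k with
  | zero => rfl
  | succ k ih => simp [dynList, ih, dynList_append_singleton]

theorem rotate_one_dynList (k : ℕ) (a b : α) : (dynList k a b).rotate 1 = dynList k b a := by
  cases k with
  | zero => rfl
  | succ k => simp [dynList, List.rotate_cons_succ, dynList_append_singleton]

theorem eq_dynList_of_isRotated {k : ℕ} {a b : α} {l : List α} (h : dynList k a b ~r l) :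
    l = dynList k a b ∨ l = dynList k b a := by
  obtain ⟨n, rfl⟩ := h
  induction n with
  | zero => simp
  | succ n ih =>
    rw [← List.rotate_rotate]
    rcases ih with h | h <;> simp [h, rotate_one_dynList]

theorem eq_dynList_of_tupleEquiv {k : ℕ} {a b : α} {l : List α}
    (h : TupleEquiv (dynList k a b) l) :
    l = dynList k a b ∨ l = dynList k b a := by
  rcases h with h | h
  · exact eq_dynList_of_isRotated h
  · rw [reverse_dynList] at h
    exact (eq_dynList_of_isRotated h).symm

end

variable {A : Type*} [CommRing A]

theorem mMat_append (l₁ l₂ : List A) : mMat (l₁ ++ l₂) = mMat l₂ * mMat l₁ := by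
  induction l₁ with
  | nil => simp [mMat]
  | cons a l ih => simp [mMat, ih, mul_assoc]

theorem mMat_dynList (k : ℕ) (a b : A) : mMat (dynList k a b) = mMat [a, b] ^ k := by
  induction k with
  | zero => rfl
  | succ k ih =>
    rw [show dynList (k + 1) a b = [a, b] ++ dynList k a b from rfl, mMat_append, ih, pow_succ]

theorem mMat_cons_one_zero (a : A) (t : List A) :
    mMat (a :: t) 1 0 = a * mMat t 1 0 + mMat t 1 1 := by
  simp [mMat, Matrix.mul_apply, Fin.sum_univ_two, mul_comm]

theorem mMat_cons_one_one (a : A) (t : List A) : mMat (a :: t) 1 1 = -mMat t 1 0 := by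
  simp [mMat, Matrix.mul_apply, Fin.sum_univ_two]

theorem mMat_append_singleton_one_zero (l : List A) (b : A) : mMat (l ++ [b]) 1 0 = cont l := by
  induction l using cont.induct with
  | case1 => simp [mMat, cont]
  | case2 a => simp [mMat, cont]
  | case3 a c t ih₁ ih₂ =>
    rw [List.cons_append, mMat_cons_one_zero, ih₁, List.cons_append, mMat_cons_one_one, ih₂,
      cont]
    ring

theorem mMat_one_one_eq_neg_cont {l : List A} (h : 2 ≤ l.length) :
    mMat l 1 1 = -cont l.tail.dropLast := by
  obtain ⟨a, t, rfl⟩ : ∃ a t, l = a :: t := List.exists_cons_of_length_pos (by omega)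
  have ht : t ≠ [] := List.ne_nil_of_length_pos (by simp only [List.length_cons] at h; omega)
  rw [List.tail_cons, mMat_cons_one_one, ← List.dropLast_append_getLast ht,
    mMat_append_singleton_one_zero, List.dropLast_append_getLast ht]

theorem IsQuiddity.mMat_zero_one {l : List A} (h : IsQuiddity l) : mMat l 0 1 = 0 := by
  rcases h with h | h <;> simp [h]

theorem IsQuiddity.mMat_one_one {l : List A} (h : IsQuiddity l) :
    mMat l 1 1 = 1 ∨ mMat l 1 1 = -1 := by
  rcases h with h | h <;> simp [h]

theorem IsQuiddity.cont_tail_dropLast {l : List A} (hl : IsQuiddity l) (h : 2 ≤ l.length) :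
    cont l.tail.dropLast = 1 ∨ cont l.tail.dropLast = -1 := by
  have := hl.mMat_one_one
  rw [mMat_one_one_eq_neg_cont h, neg_eq_iff_eq_neg, neg_inj] at this
  exact this.symm

theorem mMat_pair_of_mul_eq_one {u v : A} (h : u * v = 1) : mMat [u, v] = !![0, -v; u, -1] := by
  simp [mMat, Matrix.one_fin_two, (mul_comm v u).trans h]

theorem mMat_pair_sq_add_self_add_one {u v : A} (h : u * v = 1) :
    mMat [u, v] ^ 2 + mMat [u, v] + 1 = 0 := by
  rw [mMat_pair_of_mul_eq_one h, sq, Matrix.mul_fin_two, Matrix.one_fin_two,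
    Matrix.eta_fin_two 0]
  simp [h, (mul_comm v u).trans h]

theorem mMat_dynList_three {u v : A} (h : u * v = 1) : mMat (dynList 3 u v) = 1 := by
  set N := mMat [u, v]
  have hN : N ^ 3 = (N - 1) * (N ^ 2 + N + 1) + 1 := by noncomm_ring
  rw [mMat_dynList, hN, mMat_pair_sq_add_self_add_one h, mul_zero, zero_add]

theorem three_le_of_isQuiddity_dynList [Nontrivial A] {u v : A} (h : u * v = 1) {k : ℕ}
    (hk : 0 < k) (hq : IsQuiddity (dynList k u v)) : 3 ≤ k := by
  have hv : v ≠ 0 := by rintro rfl; simp at h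
  have hN := mMat_pair_of_mul_eq_one h
  have hN2 : mMat [u, v] ^ 2 = -1 - mMat [u, v] :=
    eq_sub_of_add_eq (eq_neg_of_add_eq_zero_left (mMat_pair_sq_add_self_add_one h))
  by_contra! hk3
  have h01 := hq.mMat_zero_one
  rw [mMat_dynList] at h01
  interval_cases k
  · simp [hN, hv] at h01
  · rw [hN2, hN] at h01
    simp [hv] at h01

theorem length_oplus {la lb : List A} (ha : 2 ≤ la.length) (hb : 2 ≤ lb.length) :
    (oplus la lb).length + 2 = la.length + lb.length := by
  simp only [oplus, List.length_cons, List.length_append, List.length_dropLast, List.length_tail]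
  omega

theorem tail_dropLast_isSuffix_oplus (la lb : List A) : lb.tail.dropLast <:+ oplus la lb :=
  ((List.suffix_cons _ _).trans (List.suffix_append _ _)).trans (List.suffix_cons _ _)

theorem not_cont_eq_one_or_neg_one_of_isSuffix_dynList_three {u v : A} (h : u * v = 1)
    (hv1 : v ≠ 1) (hv2 : v ≠ -1) {s : List A} (hs : s <:+ dynList 3 u v) (h1 : 1 ≤ s.length)
    (h3 : s.length ≤ 3) : ¬(cont s = 1 ∨ cont s = -1) := by
  have : Nontrivial A := nontrivial_of_ne v 1 hv1
  rw [List.suffix_iff_eq_drop, length_dynList] at hs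
  interval_cases hn : s.length <;> rw [hs] <;> simp [dynList, cont, h, hv1, hv2, neg_eq_iff_eq_neg]

theorem not_quiddityReducible_dynList_three {u v : A} (h : u * v = 1) (hu1 : u ≠ 1)
    (hu2 : u ≠ -1) : ¬QuiddityReducible (dynList 3 u v) := by
  have hv1 : v ≠ 1 := by rintro rfl; exact hu1 (by simpa using h)
  have hv2 : v ≠ -1 := by rintro rfl; exact hu2 (by linear_combination -h)
  rintro ⟨a, b, ha, hb, hbq, hc⟩
  have hlen := length_oplus (by omega : 2 ≤ a.length) (by omega : 2 ≤ b.length)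
  have hinner := hbq.cont_tail_dropLast (by omega)
  have hsuf := tail_dropLast_isSuffix_oplus a b
  have hlb : b.tail.dropLast.length = b.length - 2 := by
    simp only [List.length_dropLast, List.length_tail]
    omega
  rcases eq_dynList_of_tupleEquiv hc with hab | hab <;>
    rw [hab] at hsuf hlen <;> rw [length_dynList] at hlen
  · exact not_cont_eq_one_or_neg_one_of_isSuffix_dynList_three h hv1 hv2 hsuf (by omega)
      (by omega) hinner
  · exact not_cont_eq_one_or_neg_one_of_isSuffix_dynList_three ((mul_comm v u).trans h) hu1 hu2
      hsuf (by omega) (by omega) hinner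

end Quiddity

open Quiddity

theorem stmt8_general (A : Type*) [CommRing A] (u : Aˣ)
    (hu1 : u ≠ 1) (hu2 : u ≠ -1) :
    mMat (dynList 3 (u : A) ((u⁻¹ : Aˣ) : A)) = 1 ∧
    IsQuiddity (dynList 3 (u : A) ((u⁻¹ : Aˣ) : A)) ∧
    (∀ k, 0 < k → IsQuiddity (dynList k (u : A) ((u⁻¹ : Aˣ) : A)) → 3 ≤ k) ∧
    ¬ QuiddityReducible (dynList 3 (u : A) ((u⁻¹ : Aˣ) : A)) := by
  have hu1' : (u : A) ≠ 1 := by simpa using hu1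
  have hu2' : (u : A) ≠ -1 := fun h => hu2 (Units.ext (by simpa using h))
  have : Nontrivial A := nontrivial_of_ne _ _ hu1'
  have hsol := mMat_dynList_three u.mul_inv
  exact ⟨hsol, Or.inl hsol, fun k hk hq => three_le_of_isQuiddity_dynList u.mul_inv hk hq,
    not_quiddityReducible_dynList_three u.mul_inv hu1' hu2'⟩

/-- for a unit `u` of a finite commutative ring with `u ≠ 1`, `u ≠ −1`,
`u ≠ u⁻¹`, one has `M₆(u, u⁻¹, u, u⁻¹, u, u⁻¹) = Id`, the `(u, u⁻¹)`-dynomial minimal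
solution has size 6, and it is irreducible. -/
theorem stmt8 (A : Type*) [CommRing A] [Fintype A] (u : Aˣ)
    (hu1 : u ≠ 1) (hu2 : u ≠ -1) (huv : u ≠ u⁻¹) :
    mMat (dynList 3 (u : A) ((u⁻¹ : Aˣ) : A)) = 1 ∧
    IsQuiddity (dynList 3 (u : A) ((u⁻¹ : Aˣ) : A)) ∧
    (∀ k, 0 < k → IsQuiddity (dynList k (u : A) ((u⁻¹ : Aˣ) : A)) → 3 ≤ k) ∧
    ¬ QuiddityReducible (dynList 3 (u : A) ((u⁻¹ : Aˣ) : A)) :=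
  stmt8_general A u hu1 hu2
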